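/- Let ε > 0 be a real number and let ζ be the Riemann zeta function. Then for every s ∈ ℂ with Re s > 0, the Newton series ∑_{n=0}^∞ (∑_{k=0}^n P_k(n)·ζ(k+1+ε))·P_n(s) converges and its sum equals ζ(s+1+ε). -/

import Mathlib

open Filter Finset Topology

/-- The `n`-th Pochhammer–Newton polynomial `P_n(α) = ((-1)^n / n!) ∏_{m=0}^{n-1} (α - m)`. -/
noncomputable def pochNewton (n : ℕ) (α : ℂ) : ℂ :=
  ((-1 : ℂ) ^ n / (n.factorial : ℂ)) * ∏ m ∈ Finset.range n, (α - (m : ℂ))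

lemma prod_range_cast_sub (n k : ℕ) :
    ∏ m ∈ Finset.range k, ((n : ℂ) - (m : ℂ)) = (n.descFactorial k : ℂ) := by
  induction k with
  | zero => simp
  | succ k ih =>
    rw [Finset.prod_range_succ, ih, Nat.descFactorial_succ]
    rcases lt_trichotomy n k with h | h | h
    · rw [Nat.descFactorial_eq_zero_iff_lt.mpr h]; push_cast; ring
    · subst h; simp
    · push_cast [Nat.cast_sub (by omega : k ≤ n)]; ring

lemma pochNewton_natCast (k n : ℕ) :
    pochNewton k (n : ℂ) = (-1 : ℂ) ^ k * (n.choose k : ℂ) := by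
  rw [pochNewton, prod_range_cast_sub, Nat.descFactorial_eq_factorial_mul_choose]
  have : (k.factorial : ℂ) ≠ 0 := Nat.cast_ne_zero.mpr k.factorial_ne_zero
  push_cast
  field_simp

lemma binom_sum (n : ℕ) (y : ℂ) :
    ∑ k ∈ Finset.range (n + 1), pochNewton k (n : ℂ) * y ^ k = (1 - y) ^ n := by
  have := add_pow (-y) 1 n
  simp only [one_pow, mul_one] at this
  rw [show (1 : ℂ) - y = -y + 1 by ring, this]
  refine Finset.sum_congr rfl fun k _ => ?_
  rw [pochNewton_natCast, neg_pow]
  ring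

lemma pochNewton_succ (n : ℕ) (α : ℂ) :
    ((n : ℂ) + 1) * pochNewton (n + 1) α = ((n : ℂ) - α) * pochNewton n α := by
  have h1 : ((n.factorial : ℂ)) ≠ 0 := Nat.cast_ne_zero.mpr n.factorial_ne_zero
  have h3 : ((n : ℂ) + 1) ≠ 0 := by
    have := Nat.cast_ne_zero (R := ℂ).mpr (Nat.succ_ne_zero n)
    push_cast at this; exact this
  rw [pochNewton, pochNewton, Finset.prod_range_succ, Nat.factorial_succ]
  push_cast
  field_simp
  ring

-- norm bound
lemma pochNewton_norm_le (s : ℂ) (n : ℕ) :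
    ‖pochNewton n s‖ ≤ ∏ m ∈ Finset.range n, ((‖s‖ + 1 + m) / (m + 1)) := by
  have hfact : (n.factorial : ℝ) = ∏ m ∈ Finset.range n, ((m : ℝ) + 1) := by
    induction n with
    | zero => simp
    | succ n ih => rw [Finset.prod_range_succ, ← ih, Nat.factorial_succ]; push_cast; ring
  rw [pochNewton, norm_mul, norm_div, norm_pow, norm_neg, norm_one, one_pow,
    Complex.norm_natCast, norm_prod, hfact, Finset.prod_div_distrib, one_div,
    ← Finset.prod_inv_distrib, ← Finset.prod_mul_distrib, ← Finset.prod_div_distrib]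
  refine Finset.prod_le_prod (fun m _ => by positivity) (fun m _ => ?_)
  rw [inv_mul_eq_div]
  refine div_le_div_of_nonneg_right ?_ (by positivity) |>.trans_eq rfl
  calc ‖s - (m : ℂ)‖ ≤ ‖s‖ + ‖(m : ℂ)‖ := norm_sub_le _ _
    _ ≤ ‖s‖ + 1 + m := by rw [Complex.norm_natCast]; linarith

lemma summable_master (s : ℂ) {r : ℝ} (hr0 : 0 < r) (hr1 : r < 1) :
    Summable (fun n : ℕ =>
      (∏ m ∈ Finset.range n, ((‖s‖ + 1 + m) / (m + 1))) * (((n : ℝ) + 1) * r ^ n)) := by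
  set B : ℕ → ℝ := fun n => ∏ m ∈ Finset.range n, ((‖s‖ + 1 + m) / (m + 1)) with hB
  have hBpos : ∀ n, 0 < B n := fun n => Finset.prod_pos fun m _ => by positivity
  apply summable_of_ratio_test_tendsto_lt_one hr1
  · filter_upwards [eventually_ge_atTop 0] with n _
    have := hBpos n
    positivity
  · have key : ∀ n : ℕ, ‖B (n+1) * ((((n+1:ℕ):ℝ)+1) * r ^ (n+1))‖ / ‖B n * (((n:ℝ)+1) * r ^ n)‖
        = ((‖s‖ + 1 + n) / (n + 1)) * (((n:ℝ) + 2) / (n + 1)) * r := by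
      intro n
      have h1 : B (n+1) = B n * ((‖s‖ + 1 + n) / (n + 1)) := by
        simp only [hB, Finset.prod_range_succ]
      have hb := hBpos n
      push_cast
      have h1' : ‖B (n+1) * (((n:ℝ)+1+1) * r ^ (n+1))‖
          = ‖(B n * ((‖s‖ + 1 + n) / (n + 1))) * (((n:ℝ)+1+1) * r ^ (n+1))‖ := by rw [← h1]
      rw [h1', Real.norm_eq_abs, Real.norm_eq_abs, abs_of_pos (by positivity),
        abs_of_pos (by positivity), pow_succ]
      field_simp
      ring
    refine Tendsto.congr (fun n => (key n).symm) ?_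
    have h2 : Tendsto (fun n : ℕ => ((‖s‖ + 1 + n) / (n + 1))) atTop (𝓝 1) := by
      have : ∀ n : ℕ, ((‖s‖ + 1 + n) / ((n:ℝ) + 1)) = ‖s‖ / (n + 1) + 1 := by
        intro n; field_simp; ring
      simp_rw [this]
      have := Tendsto.div_atTop (tendsto_const_nhds (x := ‖s‖) (f := atTop))
        (tendsto_atTop_add_const_right atTop (1:ℝ) tendsto_natCast_atTop_atTop)
      simpa using this.add tendsto_const_nhds
    have h3 : Tendsto (fun n : ℕ => (((n:ℝ) + 2) / (n + 1))) atTop (𝓝 1) := by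
      have : ∀ n : ℕ, (((n:ℝ) + 2) / ((n:ℝ) + 1)) = 1 / (n + 1) + 1 := by
        intro n; field_simp; ring
      simp_rw [this]
      have := Tendsto.div_atTop (tendsto_const_nhds (x := (1:ℝ)) (f := atTop))
        (tendsto_atTop_add_const_right atTop (1:ℝ) tendsto_natCast_atTop_atTop)
      simpa using this.add tendsto_const_nhds
    simpa using (h2.mul h3).mul_const r

lemma hasSum_pochNewton_cpow (s : ℂ) {x : ℝ} (hx0 : 0 ≤ x) (hx1 : x < 1) :
    HasSum (fun n => pochNewton n s * (x : ℂ) ^ n) (((1 - x : ℝ) : ℂ) ^ s) := by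
  set r : ℝ := (x + 1) / 2 with hrdef
  have hr0 : 0 < r := by rw [hrdef]; linarith
  have hr1 : r < 1 := by rw [hrdef]; linarith
  have hxr : x < r := by rw [hrdef]; linarith
  set B : ℕ → ℝ := fun n => ∏ m ∈ Finset.range n, ((‖s‖ + 1 + m) / (m + 1)) with hB
  have hBpos : ∀ n, 0 < B n := fun n => Finset.prod_pos fun m _ => by positivity
  have hPB : ∀ n, ‖pochNewton n s‖ ≤ B n := pochNewton_norm_le s
  have hmaster : Summable (fun n : ℕ => B n * (((n : ℝ) + 1) * r ^ n)) :=
    summable_master s hr0 hr1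
  -- the two bounds
  set u : ℕ → ℝ := fun n => B n * ((n : ℝ) * r ^ (n - 1)) with hu
  have husum : Summable u := by
    refine Summable.of_nonneg_of_le (fun n => by have := hBpos n; positivity)
      (fun n => ?_) (hmaster.mul_left (1 / r))
    simp only [hu]
    rcases Nat.eq_zero_or_pos n with rfl | hn
    · simp; positivity
    · have h1 : (r : ℝ) ^ (n - 1) = r ^ n / r := by
        rw [eq_div_iff (ne_of_gt hr0), ← pow_succ, Nat.sub_add_cancel hn]
      rw [h1]
      have hb := (hBpos n).le
      have h2 : (n : ℝ) ≤ (n : ℝ) + 1 := by linarith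
      calc B n * ((n:ℝ) * (r ^ n / r)) = (1 / r) * (B n * ((n:ℝ) * r ^ n)) := by
            field_simp
        _ ≤ (1 / r) * (B n * (((n:ℝ) + 1) * r ^ n)) := by
            have : (0:ℝ) ≤ r ^ n := by positivity
            apply mul_le_mul_of_nonneg_left _ (by positivity)
            apply mul_le_mul_of_nonneg_left _ hb
            nlinarith
  have hvsum : Summable (fun n : ℕ => B n * r ^ n) := by
    refine Summable.of_nonneg_of_le (fun n => by have := hBpos n; positivity)
      (fun n => ?_) hmaster
    have hb := (hBpos n).le
    nth_rewrite 1 [show B n * r ^ n = B n * (1 * r ^ n) by ring]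
    gcongr
    have : (0:ℝ) ≤ (n:ℝ) := Nat.cast_nonneg n
    linarith
  -- the series of functions
  set t : Set ℝ := Set.Ioo (-r) r with ht
  have hxt : x ∈ t := ⟨by linarith, hxr⟩
  have h0t : (0:ℝ) ∈ t := ⟨by linarith, hr0⟩
  set g : ℕ → ℝ → ℂ := fun n y => pochNewton n s * (y : ℂ) ^ n with hg
  set g' : ℕ → ℝ → ℂ := fun n y => pochNewton n s * ((n : ℂ) * (y : ℂ) ^ (n - 1)) with hg'
  have hderiv : ∀ n y, HasDerivAt (g n) (g' n y) y := by
    intro n y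
    exact HasDerivAt.const_mul _ ((hasDerivAt_pow n ((y : ℝ) : ℂ)).comp_ofReal)
  have hbound : ∀ n, ∀ y ∈ t, ‖g' n y‖ ≤ u n := by
    intro n y hy
    rw [hg', hu, norm_mul, norm_mul, norm_pow, Complex.norm_natCast, Complex.norm_real,
      Real.norm_eq_abs]
    have hyr : |y| ≤ r := le_of_lt (abs_lt.mpr ⟨hy.1, hy.2⟩)
    have h1 : |y| ^ (n - 1) ≤ r ^ (n - 1) := pow_le_pow_left₀ (abs_nonneg y) hyr _
    have h2 : ‖pochNewton n s‖ * ((n:ℝ) * |y| ^ (n-1)) ≤ B n * ((n:ℝ) * r ^ (n-1)) := by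
      apply mul_le_mul (hPB n) _ (by positivity) (hBpos n).le
      apply mul_le_mul_of_nonneg_left h1 (Nat.cast_nonneg n)
    exact h2
  have hgbound : ∀ n, ∀ y ∈ t, ‖g n y‖ ≤ B n * r ^ n := by
    intro n y hy
    rw [hg, norm_mul, norm_pow, Complex.norm_real, Real.norm_eq_abs]
    have hyr : |y| ≤ r := le_of_lt (abs_lt.mpr ⟨hy.1, hy.2⟩)
    exact mul_le_mul (hPB n) (pow_le_pow_left₀ (abs_nonneg y) hyr _) (by positivity) (hBpos n).le
  have hsum0 : Summable (fun n => g n 0) := by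
    apply summable_of_ne_finset_zero (s := {0})
    intro n hn
    simp only [Finset.mem_singleton] at hn
    simp [hg, zero_pow hn]
  have hGsum : ∀ y ∈ t, Summable (fun n => g n y) := by
    intro y hy
    exact Summable.of_norm_bounded hvsum (fun n => hgbound n y hy)
  have hG'sum : ∀ y ∈ t, Summable (fun n => g' n y) := by
    intro y hy
    exact Summable.of_norm_bounded husum (fun n => hbound n y hy)
  have hopen : IsOpen t := isOpen_Ioo
  have hconn : IsPreconnected t := isPreconnected_Ioo
  set G : ℝ → ℂ := fun y => ∑' n, g n y with hGdef
  have hGderiv : ∀ y ∈ t, HasDerivAt G (∑' n, g' n y) y := by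
    intro y hy
    exact hasDerivAt_tsum_of_isPreconnected husum hopen hconn
      (fun n z _ => hderiv n z) hbound h0t hsum0 hy
  -- the ODE : for y ∈ t, (1-y) * G' y + s * G y = 0 etc; define φ
  set φ : ℝ → ℂ := fun y => G y * ((1 - y : ℝ) : ℂ) ^ (-s) with hφ
  have hφderiv : ∀ y ∈ t, HasDerivAt φ 0 y := by
    intro y hy
    have hy1 : (0:ℝ) < 1 - y := by have := hy.2; linarith
    have hcne : ((1 - y : ℝ) : ℂ) ≠ 0 := by
      exact_mod_cast ne_of_gt hy1
    -- derivative of the cpow factor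
    have hd2 : HasDerivAt (fun z : ℝ => ((1 - z : ℝ) : ℂ) ^ (-s))
        (s * ((1 - y : ℝ) : ℂ) ^ (-s - 1)) y := by
      have hbase : HasDerivAt (fun z : ℂ => (1 - z)) (-1 : ℂ) (y : ℂ) := by
        simpa using (hasDerivAt_id (y:ℂ)).const_sub 1
      have hslit : ((1:ℂ) - (y:ℂ)) ∈ Complex.slitPlane := by
        refine Or.inl ?_
        simp only [Complex.sub_re, Complex.one_re, Complex.ofReal_re]
        linarith
      have := (hbase.cpow_const (c := -s) hslit).comp_ofReal
      have heq : ((1:ℂ) - (y:ℂ)) = ((1 - y : ℝ) : ℂ) := by push_cast; ring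
      rw [heq] at this
      convert this using 1
      · funext z; norm_num
      · ring
    have hd1 := hGderiv y hy
    set Y : ℂ := (y : ℂ) with hYdef
    set D : ℂ := ∑' n, g' n y with hD
    -- series manipulations
    have hDsum : Summable (fun n => g' n y) := hG'sum y hy
    have hshift : D = ∑' n : ℕ, ((n : ℂ) + 1) * pochNewton (n + 1) s * Y ^ n := by
      rw [hD, Summable.tsum_eq_zero_add hDsum]
      have : g' 0 y = 0 := by simp [hg']
      rw [this, zero_add]
      congr 1
      funext n
      simp only [hg']
      push_cast
      ring_nf
      rfl
    have hnP : Summable (fun n : ℕ => (n : ℂ) * pochNewton n s * Y ^ n) := by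
      refine ((hDsum.mul_left Y).congr ?_)
      intro n
      simp only [hg']
      rcases Nat.eq_zero_or_pos n with rfl | hn
      · simp
      · have : Y * Y ^ (n - 1) = Y ^ n := by
          rw [← pow_succ', Nat.sub_add_cancel hn]
        calc Y * (pochNewton n s * ((n:ℂ) * Y ^ (n-1)))
            = (n:ℂ) * pochNewton n s * (Y * Y ^ (n-1)) := by ring
          _ = (n:ℂ) * pochNewton n s * Y ^ n := by rw [this]
    have hYD : Y * D = ∑' n : ℕ, (n : ℂ) * pochNewton n s * Y ^ n := by
      rw [hD, ← tsum_mul_left]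
      congr 1
      funext n
      simp only [hg']
      rcases Nat.eq_zero_or_pos n with rfl | hn
      · simp
      · have h5 : Y * Y ^ (n - 1) = Y ^ n := by
          rw [← pow_succ', Nat.sub_add_cancel hn]
        calc Y * (pochNewton n s * ((n:ℂ) * Y ^ (n-1)))
            = (n:ℂ) * pochNewton n s * (Y * Y ^ (n-1)) := by ring
          _ = (n:ℂ) * pochNewton n s * Y ^ n := by rw [h5]
    have hGsumy : Summable (fun n => g n y) := hGsum y hy
    have hS1 : Summable (fun n : ℕ => ((n : ℂ) + 1) * pochNewton (n + 1) s * Y ^ n) := by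
      have := (summable_nat_add_iff 1).mpr hDsum
      refine this.congr ?_
      intro n
      simp only [hg']
      push_cast
      ring_nf
      rfl
    have hkey : D * (1 - Y) + s * G y = 0 := by
      have hGy : G y = ∑' n, pochNewton n s * Y ^ n := rfl
      have hsG : s * G y = ∑' n : ℕ, s * (pochNewton n s * Y ^ n) := by
        rw [hGy, ← tsum_mul_left]
      have e1 : D * (1 - Y) = D - Y * D := by ring
      rw [e1, hYD, hshift, hsG]
      rw [← Summable.tsum_sub hS1 hnP, ← Summable.tsum_add (hS1.sub hnP)
        (hGsumy.mul_left s)]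
      have : ∀ n : ℕ, (((n : ℂ) + 1) * pochNewton (n + 1) s * Y ^ n
          - (n : ℂ) * pochNewton n s * Y ^ n) + s * (pochNewton n s * Y ^ n) = 0 := by
        intro n
        have hrec := pochNewton_succ n s
        calc (((n : ℂ) + 1) * pochNewton (n + 1) s * Y ^ n
              - (n : ℂ) * pochNewton n s * Y ^ n) + s * (pochNewton n s * Y ^ n)
            = (((n : ℂ) + 1) * pochNewton (n + 1) s - ((n : ℂ) - s) * pochNewton n s) * Y ^ n := by
              ring
          _ = 0 := by rw [hrec]; ring
      rw [tsum_congr this, tsum_zero]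
    -- now conclude the derivative is zero
    have hsplit : ((1 - y : ℝ) : ℂ) ^ (-s) = ((1 - y : ℝ) : ℂ) ^ (-s - 1) * ((1 - y : ℝ) : ℂ) := by
      conv_lhs => rw [show -s = (-s - 1) + 1 by ring]
      rw [Complex.cpow_add _ _ hcne, Complex.cpow_one]
    have hYeq : ((1 - y : ℝ) : ℂ) = 1 - Y := by rw [hYdef]; push_cast; ring
    have h0 : D * ((1 - y : ℝ) : ℂ) ^ (-s) + G y * (s * ((1 - y : ℝ) : ℂ) ^ (-s - 1)) = 0 := by
      rw [hsplit, hYeq]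
      calc D * (((1 - Y) ^ (-s - 1) * (1 - Y))) + G y * (s * (1 - Y) ^ (-s - 1))
          = (1 - Y) ^ (-s - 1) * (D * (1 - Y) + s * G y) := by ring
        _ = 0 := by rw [hkey, mul_zero]
    have final := hd1.mul hd2
    rw [hD] at h0
    rw [h0] at final
    exact final
  -- φ is constant on [0, x]
  have hIcc : Set.Icc (0:ℝ) x ⊆ t := by
    intro y hy
    exact ⟨by linarith [hy.1], lt_of_le_of_lt hy.2 hxr⟩
  have hcont : ContinuousOn φ (Set.Icc 0 x) := by
    intro y hy
    exact ((hφderiv y (hIcc hy)).continuousAt).continuousWithinAt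
  have hconst := constant_of_has_deriv_right_zero hcont
    (fun y hy => (hφderiv y (hIcc (Set.mem_Icc_of_Ico hy))).hasDerivWithinAt)
  have hφx : φ x = φ 0 := hconst x ⟨hx0, le_refl x⟩
  -- compute φ 0 = 1
  have hG0 : G 0 = 1 := by
    have hrfl : G 0 = ∑' n, g n 0 := rfl
    rw [hrfl, tsum_eq_single 0]
    · simp [hg, pochNewton]
    · intro n hn
      simp [hg, zero_pow hn]
  have hφ0 : φ 0 = 1 := by
    rw [hφ]
    simp only [hG0]
    norm_num
  -- hence G x = (1-x)^s
  have hcne : ((1 - x : ℝ) : ℂ) ≠ 0 := by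
    have : (0:ℝ) < 1 - x := by linarith
    exact_mod_cast ne_of_gt this
  have hpne : ((1 - x : ℝ) : ℂ) ^ s ≠ 0 := by
    rw [Complex.cpow_def_of_ne_zero hcne]
    exact Complex.exp_ne_zero _
  have hGx : G x = ((1 - x : ℝ) : ℂ) ^ s := by
    have h1 : G x * ((1 - x : ℝ) : ℂ) ^ (-s) = 1 := by
      have := hφx
      rw [hφ0] at this
      exact this
    rw [Complex.cpow_neg] at h1
    rw [mul_inv_eq_one₀ hpne] at h1
    exact h1
  have := (hGsum x hxt).hasSum
  rw [hGdef] at hGx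
  rw [← hGx]
  exact this

lemma log_le_harmonic (n : ℕ) :
    Real.log ((n : ℝ) + 1) ≤ ∑ j ∈ Finset.range n, 1 / ((j : ℝ) + 1) := by
  induction n with
  | zero => simp
  | succ n ih =>
    rw [Finset.sum_range_succ]
    have hpos : (0:ℝ) < (n:ℝ) + 1 := by positivity
    have hd : Real.log ((n:ℝ)+1+1) - Real.log ((n:ℝ)+1) = Real.log (((n:ℝ)+1+1)/((n:ℝ)+1)) :=
      (Real.log_div (by positivity) (by positivity)).symm
    have h2 : Real.log (((n:ℝ)+1+1)/((n:ℝ)+1)) ≤ ((n:ℝ)+1+1)/((n:ℝ)+1) - 1 :=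
      Real.log_le_sub_one_of_pos (by positivity)
    have h3 : ((n:ℝ)+1+1)/((n:ℝ)+1) - 1 = 1/((n:ℝ)+1) := by field_simp; ring
    push_cast
    linarith

lemma pochNewton_norm_eq (s : ℂ) (n : ℕ) :
    ‖pochNewton n s‖ = ∏ m ∈ Finset.range n, (‖s - (m : ℂ)‖ / ((m : ℝ) + 1)) := by
  have hfact : (n.factorial : ℝ) = ∏ m ∈ Finset.range n, ((m : ℝ) + 1) := by
    induction n with
    | zero => simp
    | succ n ih => rw [Finset.prod_range_succ, ← ih, Nat.factorial_succ]; push_cast; ring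
  rw [pochNewton, norm_mul, norm_div, norm_pow, norm_neg, norm_one, one_pow,
    Complex.norm_natCast, norm_prod, hfact, one_div, ← Finset.prod_inv_distrib,
    ← Finset.prod_mul_distrib]
  exact Finset.prod_congr rfl fun m _ => by rw [inv_mul_eq_div]

set_option maxHeartbeats 1000000 in
lemma summable_norm_pochNewton {s : ℂ} (hs : 0 < s.re) :
    Summable (fun n => ‖pochNewton n s‖) := by
  set δ : ℝ := s.re with hδ
  set p : ℝ := 1 + δ / 2 with hp
  have hp1 : 1 < p := by rw [hp]; linarith
  -- choose j₀
  obtain ⟨j₀, hj₀⟩ := exists_nat_ge (max δ ((s.im ^ 2 + 3 * δ ^ 2 / 4) / δ))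
  have hj₀δ : δ ≤ (j₀ : ℝ) := le_trans (le_max_left _ _) hj₀
  have hj₀im : (s.im ^ 2 + 3 * δ ^ 2 / 4) / δ ≤ (j₀ : ℝ) := le_trans (le_max_right _ _) hj₀
  -- step 1 : distance bound
  have hdist : ∀ j : ℕ, j₀ ≤ j → ‖s - (j : ℂ)‖ ≤ (j : ℝ) - δ / 2 := by
    intro j hj
    have hjr : (j₀ : ℝ) ≤ (j : ℝ) := Nat.cast_le.mpr hj
    have hjδ : δ ≤ (j : ℝ) := le_trans hj₀δ hjr
    have him : s.im ^ 2 + 3 * δ ^ 2 / 4 ≤ δ * (j : ℝ) := by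
      have := (div_le_iff₀ hs).mp (le_trans hj₀im hjr)
      linarith [this]
    have hnorm : ‖s - (j : ℂ)‖ = Real.sqrt ((s.re - j) ^ 2 + s.im ^ 2) := by
      rw [Complex.norm_def, Complex.normSq_apply]
      simp only [Complex.sub_re, Complex.natCast_re, Complex.sub_im, Complex.natCast_im,
        sub_zero]
      ring_nf
    rw [hnorm]
    have hc : (0:ℝ) ≤ (j : ℝ) - δ / 2 := by linarith
    have hsq : (s.re - j) ^ 2 + s.im ^ 2 ≤ ((j : ℝ) - δ / 2) ^ 2 := by
      rw [← hδ] at *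
      nlinarith [him, hjδ]
    calc Real.sqrt ((s.re - j) ^ 2 + s.im ^ 2) ≤ Real.sqrt (((j : ℝ) - δ / 2) ^ 2) :=
          Real.sqrt_le_sqrt hsq
      _ = (j : ℝ) - δ / 2 := Real.sqrt_sq hc
  -- step 2 : ratio ≤ exp
  have hexp : ∀ j : ℕ, j₀ ≤ j → ‖s - (j : ℂ)‖ / ((j : ℝ) + 1) ≤ Real.exp (-(p / ((j:ℝ) + 1))) := by
    intro j hj
    have hjp : (0:ℝ) < (j : ℝ) + 1 := by positivity
    rw [div_le_iff₀ hjp]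
    have h1 : 1 - p / ((j:ℝ)+1) ≤ Real.exp (-(p / ((j:ℝ)+1))) := by
      have := Real.add_one_le_exp (-(p / ((j:ℝ)+1)))
      linarith
    have h2 : ((j:ℝ) + 1) * (1 - p / ((j:ℝ)+1)) = (j:ℝ) - δ / 2 := by
      field_simp
      rw [hp]; ring
    calc ‖s - (j : ℂ)‖ ≤ (j : ℝ) - δ / 2 := hdist j hj
      _ = ((j:ℝ) + 1) * (1 - p / ((j:ℝ)+1)) := h2.symm
      _ ≤ Real.exp (-(p / ((j:ℝ)+1))) * ((j:ℝ) + 1) := by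
          calc ((j:ℝ) + 1) * (1 - p / ((j:ℝ)+1)) ≤ ((j:ℝ) + 1) * Real.exp (-(p / ((j:ℝ)+1))) :=
                mul_le_mul_of_nonneg_left h1 hjp.le
            _ = Real.exp (-(p / ((j:ℝ)+1))) * ((j:ℝ) + 1) := mul_comm _ _
  -- step 3 : the polynomial bound
  set C₀ : ℝ := ∏ m ∈ Finset.range j₀, (‖s - (m : ℂ)‖ / ((m : ℝ) + 1)) with hC₀
  set H₀ : ℝ := ∑ j ∈ Finset.range j₀, 1 / ((j : ℝ) + 1) with hH₀
  set C : ℝ := C₀ * Real.exp (p * H₀) with hC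
  have hC₀nonneg : 0 ≤ C₀ := Finset.prod_nonneg fun m _ => by positivity
  have hbound : ∀ n : ℕ, j₀ ≤ n → ‖pochNewton n s‖ ≤ C * ((n : ℝ) + 1) ^ (-p) := by
    intro n hn
    rw [pochNewton_norm_eq, ← Finset.prod_range_mul_prod_Ico _ hn, ← hC₀]
    have h4 : ∏ j ∈ Finset.Ico j₀ n, (‖s - (j : ℂ)‖ / ((j : ℝ) + 1))
        ≤ ∏ j ∈ Finset.Ico j₀ n, Real.exp (-(p / ((j:ℝ) + 1))) := by
      refine Finset.prod_le_prod (fun j _ => by positivity) (fun j hj => ?_)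
      exact hexp j (Finset.mem_Ico.mp hj).1
    have h5 : ∏ j ∈ Finset.Ico j₀ n, Real.exp (-(p / ((j:ℝ) + 1)))
        = Real.exp (-(p * ∑ j ∈ Finset.Ico j₀ n, 1 / ((j:ℝ) + 1))) := by
      rw [← Real.exp_sum]
      congr 1
      rw [Finset.mul_sum, ← Finset.sum_neg_distrib]
      exact Finset.sum_congr rfl fun j _ => by field_simp
    have h6 : Real.log ((n:ℝ)+1) - H₀ ≤ ∑ j ∈ Finset.Ico j₀ n, 1 / ((j:ℝ) + 1) := by
      have hsplit := Finset.sum_range_add_sum_Ico (fun j => 1 / ((j:ℝ) + 1)) hn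
      have := log_le_harmonic n
      rw [hH₀]
      linarith
    have hppos : (0:ℝ) < p := by linarith
    have h7 : Real.exp (-(p * ∑ j ∈ Finset.Ico j₀ n, 1 / ((j:ℝ) + 1)))
        ≤ Real.exp (-(p * (Real.log ((n:ℝ)+1) - H₀))) := by
      apply Real.exp_le_exp.mpr
      have := mul_le_mul_of_nonneg_left h6 hppos.le
      linarith
    have h8 : Real.exp (-(p * (Real.log ((n:ℝ)+1) - H₀)))
        = Real.exp (p * H₀) * ((n:ℝ)+1) ^ (-p) := by
      rw [Real.rpow_def_of_pos (by positivity : (0:ℝ) < (n:ℝ)+1), ← Real.exp_add]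
      congr 1
      ring
    calc C₀ * ∏ j ∈ Finset.Ico j₀ n, (‖s - (j : ℂ)‖ / ((j : ℝ) + 1))
        ≤ C₀ * Real.exp (-(p * (Real.log ((n:ℝ)+1) - H₀))) := by
          apply mul_le_mul_of_nonneg_left _ hC₀nonneg
          calc ∏ j ∈ Finset.Ico j₀ n, (‖s - (j : ℂ)‖ / ((j : ℝ) + 1))
              ≤ ∏ j ∈ Finset.Ico j₀ n, Real.exp (-(p / ((j:ℝ) + 1))) := h4
            _ = Real.exp (-(p * ∑ j ∈ Finset.Ico j₀ n, 1 / ((j:ℝ) + 1))) := h5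
            _ ≤ _ := h7
      _ = C * ((n:ℝ)+1) ^ (-p) := by rw [h8, hC]; ring
  -- assemble summability
  have hbase : Summable (fun n : ℕ => C * ((n:ℝ)+1) ^ (-p)) := by
    apply Summable.mul_left
    have h := Real.summable_nat_rpow.mpr (show -p < -1 by linarith)
    have h2 := (summable_nat_add_iff 1).mpr h
    refine h2.congr fun n => ?_
    push_cast
    rfl
  rw [← summable_nat_add_iff j₀]
  have hshift : Summable (fun n : ℕ => C * (((n + j₀ : ℕ) : ℝ)+1) ^ (-p)) :=
    (summable_nat_add_iff j₀).mpr hbase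
  refine Summable.of_nonneg_of_le (fun n => norm_nonneg _) (fun n => ?_) hshift
  exact hbound (n + j₀) (Nat.le_add_left _ _)

/-- Newton interpolation of the shifted Riemann zeta function: for `ε > 0` and `Re s > 0`,
the Newton series `∑_{n} (∑_{k=0}^n P_k(n) ζ(k+1+ε)) P_n(s)` converges to `ζ(s+1+ε)`. -/
theorem newton_series_shifted_zeta (ε : ℝ) (hε : 0 < ε) (s : ℂ) (hs : 0 < s.re) :
    Tendsto (fun N : ℕ => ∑ n ∈ Finset.range N,
        (∑ k ∈ Finset.range (n + 1),
          pochNewton k (n : ℂ) * riemannZeta ((k : ℂ) + 1 + (ε : ℂ))) * pochNewton n s)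
      atTop (𝓝 (riemannZeta (s + 1 + (ε : ℂ)))) := by
  have hm1 : ∀ m : ℕ, ((m : ℂ) + 1) ≠ 0 := by
    intro m
    have : ((m:ℝ) + 1 : ℝ) ≠ 0 := by positivity
    intro h
    apply this
    have := congrArg Complex.re h
    simpa using this
  have hsummable_cpow : ∀ c : ℂ, 1 < c.re → Summable (fun m : ℕ => 1 / ((m : ℂ) + 1) ^ c) := by
    intro c hc
    have h := Complex.summable_one_div_nat_cpow.mpr hc
    have h2 := (summable_nat_add_iff 1).mpr h
    refine h2.congr fun m => ?_
    push_cast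
    rfl
  have hzeta : ∀ c : ℂ, 1 < c.re → riemannZeta c = ∑' m : ℕ, 1 / ((m : ℂ) + 1) ^ c := by
    intro c hc
    exact zeta_eq_tsum_one_div_nat_add_one_cpow hc
  set c₁ : ℂ := 1 + (ε : ℂ) with hc₁
  have hc₁re : c₁.re = 1 + ε := by simp [hc₁]
  set w : ℕ → ℂ := fun m => 1 / ((m : ℂ) + 1) ^ c₁ with hw
  set tc : ℕ → ℂ := fun m => (m : ℂ) / ((m : ℂ) + 1) with htc
  set tr : ℕ → ℝ := fun m => (m : ℝ) / ((m : ℝ) + 1) with htr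
  have htr0 : ∀ m, 0 ≤ tr m := fun m => by positivity
  have htr1 : ∀ m, tr m < 1 := by
    intro m
    rw [htr, div_lt_one (by positivity)]
    linarith
  have htcr : ∀ m, (tr m : ℂ) = tc m := fun m => by rw [htr, htc]; push_cast; rfl
  have htcnorm : ∀ m, ‖tc m‖ ≤ 1 := by
    intro m
    rw [← htcr, Complex.norm_real, Real.norm_eq_abs, abs_of_nonneg (htr0 m)]
    exact (htr1 m).le
  have hwsum : Summable w := hsummable_cpow c₁ (by rw [hc₁re]; linarith)
  have hwnorm : ∀ m, ‖w m‖ = ((m:ℝ) + 1) ^ (-(1 + ε)) := by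
    intro m
    rw [hw]
    simp only [norm_div, norm_one]
    have hcast : ((m : ℂ) + 1) = (((m:ℝ) + 1 : ℝ) : ℂ) := by push_cast; rfl
    rw [hcast, Complex.norm_cpow_eq_rpow_re_of_pos (by positivity), hc₁re,
      one_div, ← Real.rpow_neg (by positivity)]
  -- the inner sum identity
  have hinner : ∀ n : ℕ, (∑ k ∈ Finset.range (n + 1),
      pochNewton k (n : ℂ) * riemannZeta ((k : ℂ) + 1 + (ε : ℂ)))
      = ∑' m : ℕ, w m * tc m ^ n := by
    intro n
    have hcre : ∀ k : ℕ, 1 < ((k : ℂ) + 1 + (ε : ℂ)).re := by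
      intro k
      simp only [Complex.add_re, Complex.natCast_re, Complex.one_re, Complex.ofReal_re]
      have : (0:ℝ) ≤ (k:ℝ) := Nat.cast_nonneg k
      linarith
    have step1 : (∑ k ∈ Finset.range (n + 1),
        pochNewton k (n : ℂ) * riemannZeta ((k : ℂ) + 1 + (ε : ℂ)))
        = ∑ k ∈ Finset.range (n + 1),
          ∑' m : ℕ, pochNewton k (n : ℂ) * (1 / ((m : ℂ) + 1) ^ ((k:ℂ)+1+(ε:ℂ))) := by
      refine Finset.sum_congr rfl fun k _ => ?_
      rw [hzeta _ (hcre k), ← tsum_mul_left]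
    rw [step1, ← Summable.tsum_finsetSum (fun k _ => (hsummable_cpow _ (hcre k)).mul_left _)]
    refine tsum_congr fun m => ?_
    have hsplit : ∀ k : ℕ, (1 : ℂ) / ((m : ℂ) + 1) ^ ((k:ℂ)+1+(ε:ℂ))
        = (1 / ((m : ℂ) + 1)) ^ k * w m := by
      intro k
      rw [show ((k:ℂ)+1+(ε:ℂ)) = (k:ℂ) + c₁ by rw [hc₁]; ring,
        Complex.cpow_add _ _ (hm1 m), Complex.cpow_natCast, hw]
      rw [div_pow, one_pow]
      field_simp
    calc (∑ k ∈ Finset.range (n + 1),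
          pochNewton k (n : ℂ) * (1 / ((m : ℂ) + 1) ^ ((k:ℂ)+1+(ε:ℂ))))
        = (∑ k ∈ Finset.range (n + 1),
            pochNewton k (n : ℂ) * (1 / ((m : ℂ) + 1)) ^ k) * w m := by
          rw [Finset.sum_mul]
          exact Finset.sum_congr rfl fun k _ => by rw [hsplit k]; ring
      _ = (1 - 1 / ((m : ℂ) + 1)) ^ n * w m := by rw [binom_sum]
      _ = w m * tc m ^ n := by
          have : (1 : ℂ) - 1 / ((m : ℂ) + 1) = tc m := by
            rw [htc]
            field_simp [hm1 m]
            ring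
          rw [this]; ring
  -- the partial sums as tsum over m
  set F : ℕ → ℕ → ℂ := fun N m => ∑ n ∈ Finset.range N, w m * tc m ^ n * pochNewton n s
    with hF
  have hwtc : ∀ n : ℕ, Summable (fun m => w m * tc m ^ n * pochNewton n s) := by
    intro n
    refine Summable.mul_right _ (Summable.of_norm_bounded hwsum.norm ?_)
    intro m
    rw [norm_mul, norm_pow]
    calc ‖w m‖ * ‖tc m‖ ^ n ≤ ‖w m‖ * 1 := by
          apply mul_le_mul_of_nonneg_left _ (norm_nonneg _)
          exact pow_le_one₀ (norm_nonneg _) (htcnorm m)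
      _ = ‖w m‖ := mul_one _
  have hpartial : ∀ N : ℕ, (∑ n ∈ Finset.range N,
      (∑ k ∈ Finset.range (n + 1),
        pochNewton k (n : ℂ) * riemannZeta ((k : ℂ) + 1 + (ε : ℂ))) * pochNewton n s)
      = ∑' m : ℕ, F N m := by
    intro N
    calc (∑ n ∈ Finset.range N,
        (∑ k ∈ Finset.range (n + 1),
          pochNewton k (n : ℂ) * riemannZeta ((k : ℂ) + 1 + (ε : ℂ))) * pochNewton n s)
        = ∑ n ∈ Finset.range N, ∑' m : ℕ, w m * tc m ^ n * pochNewton n s := by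
          refine Finset.sum_congr rfl fun n _ => ?_
          rw [hinner n, ← tsum_mul_right]
      _ = ∑' m : ℕ, ∑ n ∈ Finset.range N, w m * tc m ^ n * pochNewton n s :=
          (Summable.tsum_finsetSum (fun n _ => hwtc n)).symm
      _ = ∑' m : ℕ, F N m := rfl
  -- the limit function
  set g : ℕ → ℂ := fun m => 1 / ((m : ℂ) + 1) ^ (s + 1 + (ε : ℂ)) with hgm
  have hpoint : ∀ m : ℕ, Tendsto (fun N => F N m) atTop (𝓝 (g m)) := by
    intro m
    have hh := hasSum_pochNewton_cpow s (htr0 m) (htr1 m)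
    have hh2 := (hh.mul_left (w m)).tendsto_sum_nat
    have heqf : ∀ N : ℕ, (∑ n ∈ Finset.range N, w m * (pochNewton n s * (tr m : ℂ) ^ n))
        = F N m := by
      intro N
      rw [hF]
      exact Finset.sum_congr rfl fun n _ => by rw [htcr m]; ring
    have hval : w m * ((1 - tr m : ℝ) : ℂ) ^ s = g m := by
      have h1 : ((1 - tr m : ℝ) : ℂ) = ((m : ℂ) + 1)⁻¹ := by
        rw [htr]
        have h2 : (1 : ℝ) - (m : ℝ) / ((m : ℝ) + 1) = ((m:ℝ) + 1)⁻¹ := by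
          field_simp
          ring
        rw [h2]
        push_cast
        rfl
      have harg : ((m : ℂ) + 1).arg ≠ Real.pi := by
        have hcast : ((m : ℂ) + 1) = (((m:ℝ) + 1 : ℝ) : ℂ) := by push_cast; rfl
        rw [hcast, Complex.arg_ofReal_of_nonneg (by positivity)]
        exact Ne.symm Real.pi_ne_zero
      rw [h1, Complex.inv_cpow _ _ harg]
      have hgm' : g m = 1 / ((m:ℂ)+1) ^ (s + 1 + (ε:ℂ)) := rfl
      have hwm : w m = 1 / ((m:ℂ)+1) ^ c₁ := rfl
      have hfin : ((m:ℂ)+1) ^ (s + 1 + (ε:ℂ)) = ((m:ℂ)+1) ^ c₁ * ((m:ℂ)+1) ^ s := by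
        rw [← Complex.cpow_add _ _ (hm1 m)]
        congr 1
        rw [hc₁]; ring
      rw [hgm', hwm, hfin, one_div, one_div, mul_inv]
    rw [← hval]
    exact hh2.congr heqf
  -- the uniform bound
  have hCsum : Summable (fun n => ‖pochNewton n s‖) := summable_norm_pochNewton hs
  set Creal : ℝ := ∑' n, ‖pochNewton n s‖ with hCreal
  set bound : ℕ → ℝ := fun m => ((m:ℝ) + 1) ^ (-(1 + ε)) * Creal with hbounddef
  have hboundsum : Summable bound := by
    apply Summable.mul_right
    have h := Real.summable_nat_rpow.mpr (show -(1+ε) < -1 by linarith)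
    have h2 := (summable_nat_add_iff 1).mpr h
    refine h2.congr fun m => ?_
    push_cast
    rfl
  have hbound : ∀ N m, ‖F N m‖ ≤ bound m := by
    intro N m
    rw [hF, hbounddef]
    calc ‖∑ n ∈ Finset.range N, w m * tc m ^ n * pochNewton n s‖
        ≤ ∑ n ∈ Finset.range N, ‖w m * tc m ^ n * pochNewton n s‖ := norm_sum_le _ _
      _ ≤ ∑ n ∈ Finset.range N, ‖w m‖ * ‖pochNewton n s‖ := by
          refine Finset.sum_le_sum fun n _ => ?_
          rw [norm_mul, norm_mul, norm_pow]
          have h1 : ‖w m‖ * ‖tc m‖ ^ n ≤ ‖w m‖ * 1 :=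
            mul_le_mul_of_nonneg_left (pow_le_one₀ (norm_nonneg _) (htcnorm m))
              (norm_nonneg _)
          calc ‖w m‖ * ‖tc m‖ ^ n * ‖pochNewton n s‖
              ≤ ‖w m‖ * 1 * ‖pochNewton n s‖ :=
                mul_le_mul_of_nonneg_right h1 (norm_nonneg _)
            _ = ‖w m‖ * ‖pochNewton n s‖ := by ring
      _ = ‖w m‖ * ∑ n ∈ Finset.range N, ‖pochNewton n s‖ := by rw [Finset.mul_sum]
      _ ≤ ‖w m‖ * Creal := by
          apply mul_le_mul_of_nonneg_left _ (norm_nonneg _)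
          exact Summable.sum_le_tsum _ (fun n _ => norm_nonneg _) hCsum
      _ = ((m:ℝ) + 1) ^ (-(1 + ε)) * Creal := by rw [hwnorm m]
  -- conclude
  have hzre : 1 < (s + 1 + (ε : ℂ)).re := by
    simp only [Complex.add_re, Complex.one_re, Complex.ofReal_re]
    linarith
  rw [hzeta _ hzre]
  have hmain := tendsto_tsum_of_dominated_convergence (f := F) (g := g)
    hboundsum hpoint (Filter.Eventually.of_forall hbound)
  have : (fun N : ℕ => ∑ n ∈ Finset.range N,
      (∑ k ∈ Finset.range (n + 1),
        pochNewton k (n : ℂ) * riemannZeta ((k : ℂ) + 1 + (ε : ℂ))) * pochNewton n s)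
      = fun N => ∑' m, F N m := funext hpartial
  rw [this]
  exact hmain
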